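/- Let X_1, …, X_d be n-by-n real matrices with ‖Σ_i X_i ⊗ X_i‖ < 1 for a consistent matrix norm, and let P = [(I − Σ_i X_i ⊗ X_i)^{-1}]^ψ. Then the rank of P equals the dimension (as a real vector space) of the unital algebra generated by X_1, …, X_d inside M_n(ℝ). -/

import Mathlib

open Matrix Kronecker

/-- `vec` stacks the columns of a matrix into a single column vector. -/
def vec {n : ℕ} (A : Matrix (Fin n) (Fin n) ℝ) : Fin n × Fin n → ℝ :=
  fun p => A p.1 p.2

/-- The ψ-involution on n²-by-n² matrices. -/
def psi {n : ℕ} (A : Matrix (Fin n × Fin n) (Fin n × Fin n) ℝ) :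
    Matrix (Fin n × Fin n) (Fin n × Fin n) ℝ :=
  fun p q => A (p.1, q.1) (p.2, q.2)

/-!
Write `S = ∑ᵢ Xᵢ ⊗ Xᵢ`. Since `ν` is a submultiplicative norm with `ν S < 1`, the Neumann series
gives `(1 - S)⁻¹ = ∑ₖ Sᵏ`, and `Sᵏ = ∑_{|w| = k} X_w ⊗ X_w` over the words `w` of length `k`. As
`ψ (A ⊗ B) = vec A (vec B)ᵀ`, the matrix `P` is a convergent sum of Gram matrices of the vectors
`vec X_w`. Its range therefore lies in their span, and `P v = 0` forces
`vᵀ P v = ∑_w (vec X_w ⬝ v)² = 0`, so the kernel of `P` meets that span trivially. Hence `rank P`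
is the dimension of the span of all words in the `Xᵢ`, which is the unital algebra they generate.
-/

/-- A copy of `A` carrying the norm `ν`; in finite dimension its topology is that of `A`. -/
def WithRingNorm {A : Type*} [Ring A] (_ν : RingNorm A) : Type _ := A

namespace WithRingNorm

variable {A : Type*} [Ring A] (ν : RingNorm A)

instance : Ring (WithRingNorm ν) := inferInstanceAs (Ring A)

instance : NormedRing (WithRingNorm ν) := RingNorm.toNormedRing (R := WithRingNorm ν) ν

variable [Module ℝ A]

instance : Module ℝ (WithRingNorm ν) := inferInstanceAs (Module ℝ A)

instance [FiniteDimensional ℝ A] : FiniteDimensional ℝ (WithRingNorm ν) :=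
  inferInstanceAs (FiniteDimensional ℝ A)

end WithRingNorm

theorem RingNorm.hasSum_pow_inverse_one_sub {A : Type*} [Ring A] [Module ℝ A]
    [FiniteDimensional ℝ A] [TopologicalSpace A] [IsTopologicalAddGroup A]
    [ContinuousSMul ℝ A] [T2Space A] (ν : RingNorm A)
    (hsmul : ∀ (c : ℝ) (x : A), ν (c • x) = |c| * ν x) {a : A} (ha : ν a < 1) :
    HasSum (fun k => a ^ k) (Ring.inverse (1 - a)) := by
  let _ : NormedSpace ℝ (WithRingNorm ν) := ⟨fun c x => (hsmul c x).le⟩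
  have _ : CompleteSpace (WithRingNorm ν) := FiniteDimensional.complete ℝ _
  let toA : WithRingNorm ν →ₗ[ℝ] A := LinearMap.id
  exact (hasSum_geom_series_inverse (R := WithRingNorm ν) a ha).map toA
    toA.continuous_of_finiteDimensional

def wordProd {M ι : Type*} [Monoid M] (X : ι → M) {k : ℕ} (w : Fin k → ι) : M :=
  (List.ofFn (X ∘ w)).prod

section wordProd

variable {M ι : Type*} [Monoid M] (X : ι → M)

@[simp]
theorem wordProd_cons {k : ℕ} (i : ι) (w : Fin k → ι) :
    wordProd X (Fin.cons i w : Fin (k + 1) → ι) = X i * wordProd X w := by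
  simp [wordProd, List.ofFn_succ, Function.comp_def]

theorem range_wordProd :
    Set.range (fun w : Σ k, Fin k → ι => wordProd X w.2) = Submonoid.closure (Set.range X) := by
  have hword : (fun w : Σ k, Fin k → ι => wordProd X w.2)
      = FreeMonoid.lift X ∘ FreeMonoid.ofList ∘ List.equivSigmaTuple.symm := by
    funext w
    simp [wordProd, FreeMonoid.lift_ofList, List.equivSigmaTuple, List.map_ofFn]
  rw [← FreeMonoid.mrange_lift, MonoidHom.coe_mrange, hword,
    (FreeMonoid.ofList.surjective.comp List.equivSigmaTuple.symm.surjective).range_comp]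

theorem Algebra.adjoin_range_eq_span_wordProd {R A : Type*} [CommSemiring R] [Semiring A]
    [Algebra R A] (X : ι → A) :
    Subalgebra.toSubmodule (Algebra.adjoin R (Set.range X))
      = Submodule.span R (Set.range fun w : Σ k, Fin k → ι => wordProd X w.2) := by
  rw [Algebra.adjoin_eq_span, range_wordProd]

end wordProd

theorem Matrix.sum_kronecker_pow {R ι m n : Type*} [CommSemiring R] [Fintype ι] [Fintype m]
    [Fintype n] [DecidableEq m] [DecidableEq n] (A : ι → Matrix m m R) (B : ι → Matrix n n R)
    (k : ℕ) :
    (∑ i, A i ⊗ₖ B i) ^ k = ∑ w : Fin k → ι, wordProd A w ⊗ₖ wordProd B w := by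
  induction k with
  | zero => simp [wordProd]
  | succ k ih =>
    rw [pow_succ', ih, Finset.sum_mul_sum, ← Fintype.sum_prod_type',
      ← (Fin.consEquiv fun _ => ι).sum_comp]
    simp [Fin.consEquiv, mul_kronecker_mul]

open Module Submodule

theorem LinearMap.finrank_range_eq_of_range_le_of_disjoint_ker {K V : Type*} [DivisionRing K]
    [AddCommGroup V] [Module K V] [FiniteDimensional K V] {f : V →ₗ[K] V} {W : Submodule K V}
    (hle : range f ≤ W) (hW : Disjoint W (ker f)) :
    finrank K (range f) = finrank K W := by
  refine le_antisymm (Submodule.finrank_mono hle) ?_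
  calc finrank K W = finrank K (range (f.domRestrict W)) :=
        (finrank_range_of_inj (injective_domRestrict_iff.mpr hW)).symm
    _ ≤ finrank K (range f) := Submodule.finrank_mono (range_domRestrict W f ▸ map_le_range)

theorem HasSum.matrix_mulVec {X m n : Type*} [Fintype n] {f : X → Matrix m n ℝ} {a : Matrix m n ℝ}
    (hf : HasSum f a) (v : n → ℝ) : HasSum (fun x => f x *ᵥ v) (a *ᵥ v) :=
  hf.map (mulVec.addMonoidHomLeft v) (continuous_id.matrix_mulVec continuous_const)

theorem HasSum.dotProduct {X m : Type*} [Fintype m] {f : X → m → ℝ} {a : m → ℝ}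
    (hf : HasSum f a) (v : m → ℝ) : HasSum (fun x => v ⬝ᵥ f x) (v ⬝ᵥ a) :=
  hf.map (dotProductBilin ℝ ℝ v) (continuous_const.dotProduct continuous_id)

section Gram

variable {m ι : Type*} [Fintype m] {κ : ι → Type*} [∀ k, Fintype (κ k)]
  {u : ∀ k, κ k → m → ℝ} {P : Matrix m m ℝ}

theorem Matrix.mulVec_mem_span_of_hasSum_vecMulVec
    (hP : HasSum (fun k => ∑ i, vecMulVec (u k i) (u k i)) P) (v : m → ℝ) :
    P *ᵥ v ∈ span ℝ (Set.range fun x : Σ k, κ k => u x.1 x.2) := by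
  rw [← (hP.matrix_mulVec v).tsum_eq]
  refine tsum_mem (closed_of_finiteDimensional _) fun k => ?_
  simp only [sum_mulVec, vecMulVec_mulVec, op_smul_eq_smul]
  exact sum_mem fun i _ => smul_mem _ _ (subset_span (Set.mem_range_self (⟨k, i⟩ : Σ k, κ k)))

theorem Matrix.dotProduct_eq_zero_of_hasSum_vecMulVec
    (hP : HasSum (fun k => ∑ i, vecMulVec (u k i) (u k i)) P) {v : m → ℝ} (hv : P *ᵥ v = 0)
    (k : ι) (i : κ k) : u k i ⬝ᵥ v = 0 := by
  have hquad : HasSum (fun k => ∑ i, (u k i ⬝ᵥ v) ^ 2) 0 := by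
    have := (hP.matrix_mulVec v).dotProduct v
    simp only [hv, sum_mulVec, vecMulVec_mulVec, op_smul_eq_smul, dotProduct_sum, dotProduct_smul,
      dotProduct_zero, smul_eq_mul] at this
    simpa only [sq, dotProduct_comm v] using this
  have hk := congrFun ((hasSum_zero_iff_of_nonneg fun k =>
    Finset.sum_nonneg fun i _ => sq_nonneg (u k i ⬝ᵥ v)).mp hquad) k
  exact pow_eq_zero_iff two_ne_zero |>.mp <|
    (Finset.sum_eq_zero_iff_of_nonneg fun i _ => sq_nonneg _).mp hk i (Finset.mem_univ i)

theorem Matrix.rank_eq_finrank_span_of_hasSum_vecMulVec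
    (hP : HasSum (fun k => ∑ i, vecMulVec (u k i) (u k i)) P) :
    P.rank = finrank ℝ (span ℝ (Set.range fun x : Σ k, κ k => u x.1 x.2)) := by
  refine LinearMap.finrank_range_eq_of_range_le_of_disjoint_ker ?_ ?_
  · rintro _ ⟨v, rfl⟩
    exact mulVec_mem_span_of_hasSum_vecMulVec hP v
  · refine disjoint_iff_inf_le.mpr fun w ⟨hwW, hwker⟩ => ?_
    have hperp : span ℝ (Set.range fun x : Σ k, κ k => u x.1 x.2)
        ≤ LinearMap.ker ((dotProductBilin ℝ ℝ).flip w) :=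
      span_le.mpr <| Set.range_subset_iff.mpr fun x =>
        dotProduct_eq_zero_of_hasSum_vecMulVec hP hwker x.1 x.2
    exact dotProduct_self_eq_zero.mp (hperp hwW)

end Gram

theorem psi_kronecker {n : ℕ} (A B : Matrix (Fin n) (Fin n) ℝ) :
    psi (A ⊗ₖ B) = vecMulVec (_root_.vec A) (_root_.vec B) :=
  rfl

@[simps]
def psiAddMonoidHom (n : ℕ) :
    Matrix (Fin n × Fin n) (Fin n × Fin n) ℝ →+ Matrix (Fin n × Fin n) (Fin n × Fin n) ℝ where
  toFun := psi
  map_zero' := rfl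
  map_add' _ _ := rfl

theorem continuous_psi {n : ℕ} : Continuous (psi (n := n)) := by
  unfold psi
  fun_prop

def vecLinearEquiv (n : ℕ) : Matrix (Fin n) (Fin n) ℝ ≃ₗ[ℝ] (Fin n × Fin n → ℝ) :=
  (LinearEquiv.curry ℝ ℝ (Fin n) (Fin n)).symm

theorem rank_P_eq_dim_algebra_general {n d : ℕ} (X : Fin d → Matrix (Fin n) (Fin n) ℝ)
    (ν : Matrix (Fin n × Fin n) (Fin n × Fin n) ℝ → ℝ)
    (hdef : ∀ A, ν A = 0 → A = 0)
    (htri : ∀ A B, ν (A + B) ≤ ν A + ν B)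
    (hsmul : ∀ (c : ℝ) A, ν (c • A) = |c| * ν A)
    (hsubmul : ∀ A B, ν (A * B) ≤ ν A * ν B)
    (hlt : ν (∑ i, X i ⊗ₖ X i) < 1) :
    (psi (1 - ∑ i, X i ⊗ₖ X i)⁻¹).rank
      = Module.finrank ℝ (Subalgebra.toSubmodule (Algebra.adjoin ℝ (Set.range X))) := by
  let νRing : RingNorm (Matrix (Fin n × Fin n) (Fin n × Fin n) ℝ) :=
    { toFun := ν
      map_zero' := by simpa using hsmul 0 0
      add_le' := htri
      neg' := fun A => by simpa using hsmul (-1) A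
      mul_le' := hsubmul
      eq_zero_of_map_eq_zero' := hdef }
  have hneumann : HasSum (fun k => (∑ i, X i ⊗ₖ X i) ^ k) (1 - ∑ i, X i ⊗ₖ X i)⁻¹ := by
    rw [nonsing_inv_eq_ringInverse]
    exact νRing.hasSum_pow_inverse_one_sub hsmul hlt
  have hP : HasSum
      (fun k => ∑ w : Fin k → Fin d,
        vecMulVec (_root_.vec (wordProd X w)) (_root_.vec (wordProd X w)))
      (psi (1 - ∑ i, X i ⊗ₖ X i)⁻¹) := by
    simpa only [Function.comp_def, sum_kronecker_pow, map_sum, psiAddMonoidHom_apply,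
      psi_kronecker] using hneumann.map (psiAddMonoidHom n) continuous_psi
  rw [rank_eq_finrank_span_of_hasSum_vecMulVec hP, Algebra.adjoin_range_eq_span_wordProd,
    ← (vecLinearEquiv n).finrank_map_eq, map_span, ← Set.range_comp]
  rfl

theorem rank_P_eq_dim_algebra {n d : ℕ} (X : Fin d → Matrix (Fin n) (Fin n) ℝ)
    (ν : Matrix (Fin n × Fin n) (Fin n × Fin n) ℝ → ℝ)
    (hnonneg : ∀ A, 0 ≤ ν A)
    (hdef : ∀ A, ν A = 0 → A = 0)
    (htri : ∀ A B, ν (A + B) ≤ ν A + ν B)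
    (hsmul : ∀ (c : ℝ) A, ν (c • A) = |c| * ν A)
    (hsubmul : ∀ A B, ν (A * B) ≤ ν A * ν B)
    (hlt : ν (∑ i, X i ⊗ₖ X i) < 1) :
    (psi (1 - ∑ i, X i ⊗ₖ X i)⁻¹).rank
      = Module.finrank ℝ (Subalgebra.toSubmodule (Algebra.adjoin ℝ (Set.range X))) :=
  rank_P_eq_dim_algebra_general X ν hdef htri hsmul hsubmul hlt
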